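/- arXiv:1410.5794 — 2 statements merged into one kernel-verified Lean document; each statement's English description precedes it below -/
import Mathlib

section
/- Let M be a 4×4 complex matrix with rows and columns both indexed by the set {l, m, 4, 5}. For tuples C of distinct row indices and D of distinct column indices taken from {l, m}, define the 6-vector V^{C,D} = (M^{C,D}, M^{C45,D45}, M^{C4,D4}, M^{C5,D5}, M^{C5,D4}, M^{C4,D5}), where juxtaposition appends indices (e.g. C45 appends 4 and 5 to the row tuple C) and M^{A,B} is the corresponding minor. Then the vector V^{l,m} satisfies ⟨V^{l,m}, V^{l,m}⟩ = 0, ⟨V^{l,m}, V^{∅,∅}⟩ = 0, ⟨V^{l,m}, V^{l,l}⟩ = 0, ⟨V^{l,m}, V^{m,m}⟩ = 0 and ⟨V^{l,m}, V^{lm,lm}⟩ = 0, where ⟨X,Y⟩ = X_1Y_2 + X_2Y_1 − X_3Y_4 − X_4Y_3 + X_5Y_6 + X_6Y_5. -/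
/-- The minor `M^{A,B}` of a matrix `M` with rows selected by the tuple `A`
and columns selected by the tuple `B`; for `s = 0` this equals `1`. -/
noncomputable def minor {I : Type*} (M : I → I → ℂ) {s : ℕ}
    (A : Fin s → I) (B : Fin s → I) : ℂ :=
  Matrix.det (Matrix.of fun α β => M (A α) (B β))

/-- The inner product on `ℂ⁶` with respect to the block-diagonal metric
`diag([[0,1],[1,0]], −[[0,1],[1,0]], [[0,1],[1,0]])`. -/
def form (X Y : Fin 6 → ℂ) : ℂ :=
  X 0 * Y 1 + X 1 * Y 0 - X 2 * Y 3 - X 3 * Y 2 + X 4 * Y 5 + X 5 * Y 4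

/-- The 6-vector `V^{C,D} = (M^{C,D}, M^{C45,D45}, M^{C4,D4}, M^{C5,D5}, M^{C5,D4}, M^{C4,D5})`,
where `i4` and `i5` play the roles of the indices `4` and `5`. -/
noncomputable def vvec {I : Type*} (M : I → I → ℂ) (i4 i5 : I) {s : ℕ}
    (C D : Fin s → I) : Fin 6 → ℂ :=
  ![minor M C D,
    minor M (Fin.append C ![i4, i5]) (Fin.append D ![i4, i5]),
    minor M (Fin.append C ![i4]) (Fin.append D ![i4]),
    minor M (Fin.append C ![i5]) (Fin.append D ![i5]),
    minor M (Fin.append C ![i5]) (Fin.append D ![i4]),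
    minor M (Fin.append C ![i4]) (Fin.append D ![i5])]

/-!
All five identities are polynomial identities in the entries of `M`; the first one,
`⟨V, V⟩ = 2 (M^{l,m} M^{l45,m45} - M^{l4,m4} M^{l5,m5} + M^{l5,m4} M^{l4,m5})`, is the
Desnanot–Jacobi identity for the minor on rows `l45` and columns `m45`. Expanding every minor along
its first row turns each of them into an identity of commutative rings.
-/

-- `vecAppend` carries the `simp` lemmas that compute appends of literal vectors.
theorem Fin.append_eq_vecAppend {α : Type*} {m n : ℕ} (u : Fin m → α) (v : Fin n → α) :
    Fin.append u v = Matrix.vecAppend rfl u v :=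
  rfl

section

variable {I : Type*} (M : I → I → ℂ)

theorem minor_fin_zero (A B : Fin 0 → I) : minor M A B = 1 :=
  Matrix.det_isEmpty

theorem minor_fin_one (A B : Fin 1 → I) : minor M A B = M (A 0) (B 0) :=
  Matrix.det_unique _

theorem minor_fin_two (A B : Fin 2 → I) :
    minor M A B = M (A 0) (B 0) * M (A 1) (B 1) - M (A 0) (B 1) * M (A 1) (B 0) :=
  Matrix.det_fin_two _

theorem minor_fin_three (A B : Fin 3 → I) :
    minor M A B =
      M (A 0) (B 0) * M (A 1) (B 1) * M (A 2) (B 2) - M (A 0) (B 0) * M (A 1) (B 2) * M (A 2) (B 1)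
      - M (A 0) (B 1) * M (A 1) (B 0) * M (A 2) (B 2) + M (A 0) (B 1) * M (A 1) (B 2) * M (A 2) (B 0)
      + M (A 0) (B 2) * M (A 1) (B 0) * M (A 2) (B 1) - M (A 0) (B 2) * M (A 1) (B 1) * M (A 2) (B 0) :=
  Matrix.det_fin_three _

theorem minor_fin_four (A B : Fin 4 → I) :
    minor M A B =
      M (A 0) (B 0) * minor M ![A 1, A 2, A 3] ![B 1, B 2, B 3]
      - M (A 0) (B 1) * minor M ![A 1, A 2, A 3] ![B 0, B 2, B 3]
      + M (A 0) (B 2) * minor M ![A 1, A 2, A 3] ![B 0, B 1, B 3]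
      - M (A 0) (B 3) * minor M ![A 1, A 2, A 3] ![B 0, B 1, B 2] := by
  rw [minor, Matrix.det_succ_row_zero, Fin.sum_univ_four]
  norm_num
  rfl

end

theorem diagonal_line_orthogonality_general {I : Type*} (M : I → I → ℂ) (l m i4 i5 : I) :
    form (vvec M i4 i5 ![l] ![m]) (vvec M i4 i5 ![l] ![m]) = 0
      ∧ form (vvec M i4 i5 ![l] ![m]) (vvec M i4 i5 (![] : Fin 0 → I) (![] : Fin 0 → I)) = 0
      ∧ form (vvec M i4 i5 ![l] ![m]) (vvec M i4 i5 ![l] ![l]) = 0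
      ∧ form (vvec M i4 i5 ![l] ![m]) (vvec M i4 i5 ![m] ![m]) = 0
      ∧ form (vvec M i4 i5 ![l] ![m]) (vvec M i4 i5 ![l, m] ![l, m]) = 0 := by
  refine ⟨?_, ?_, ?_, ?_, ?_⟩ <;>
  · simp only [form, vvec, Fin.append_eq_vecAppend, Matrix.cons_vecAppend, Matrix.empty_vecAppend,
      minor_fin_zero, minor_fin_one, minor_fin_two, minor_fin_three, minor_fin_four,
      Matrix.cons_val]
    ring

/-- For a 4×4 matrix with rows and columns indexed by `{l, m, 4, 5}`, the vector
`V^{l,m}` satisfies `⟨V^{l,m},V^{l,m}⟩ = ⟨V^{l,m},V^{∅,∅}⟩ = ⟨V^{l,m},V^{l,l}⟩ =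
⟨V^{l,m},V^{m,m}⟩ = ⟨V^{l,m},V^{lm,lm}⟩ = 0`. -/
theorem diagonal_line_orthogonality {I : Type*} (M : I → I → ℂ) (l m i4 i5 : I)
    (h1 : l ≠ m) (h2 : l ≠ i4) (h3 : l ≠ i5)
    (h4 : m ≠ i4) (h5 : m ≠ i5) (h6 : i4 ≠ i5) :
    form (vvec M i4 i5 ![l] ![m]) (vvec M i4 i5 ![l] ![m]) = 0
      ∧ form (vvec M i4 i5 ![l] ![m]) (vvec M i4 i5 (![] : Fin 0 → I) (![] : Fin 0 → I)) = 0
      ∧ form (vvec M i4 i5 ![l] ![m]) (vvec M i4 i5 ![l] ![l]) = 0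
      ∧ form (vvec M i4 i5 ![l] ![m]) (vvec M i4 i5 ![m] ![m]) = 0
      ∧ form (vvec M i4 i5 ![l] ![m]) (vvec M i4 i5 ![l, m] ![l, m]) = 0 :=
  diagonal_line_orthogonality_general M l m i4 i5
end

section
/- Let M be a 5×5 complex matrix with rows and columns both indexed by the set {l, m, p, 4, 5}. For tuples C of distinct row indices and D of distinct column indices taken from {l, m, p}, define the 6-vector V^{C,D} = (M^{C,D}, M^{C45,D45}, M^{C4,D4}, M^{C5,D5}, M^{C5,D4}, M^{C4,D5}). Then ⟨V^{l,m}, V^{pl,pm}⟩ = 0 and ⟨V^{l,m}, V^{p,m}⟩ = 0, where ⟨X,Y⟩ = X_1Y_2 + X_2Y_1 − X_3Y_4 − X_4Y_3 + X_5Y_6 + X_6Y_5. -/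
namespace Matrix

variable {R : Type*} [CommRing R] {n : ℕ}

def bordered (a : R) (u v : Fin n → R) (B : Matrix (Fin n) (Fin n) R) :
    Matrix (Fin (n + 1)) (Fin (n + 1)) R :=
  of (Fin.cons (Fin.cons a v) fun i => Fin.cons (u i) (B i))

theorem det_bordered (a : R) (u v : Fin n → R) (B : Matrix (Fin n) (Fin n) R) :
    det (bordered a u v B) = a * det B + det (bordered 0 u v B) := by
  simp only [det_succ_row_zero (bordered _ _ _ _), Fin.sum_univ_succ]
  simp [bordered, submatrix]
  rfl

theorem det_bordered_zero_smul (t : R) (u v : Fin n → R) (B : Matrix (Fin n) (Fin n) R) :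
    det (bordered 0 u (t • v) B) = t * det (bordered 0 u v B) := by
  simp only [det_succ_row_zero (bordered _ _ _ _), Fin.sum_univ_succ]
  simp only [bordered, submatrix, of_apply, Fin.cons_zero, Fin.cons_succ, Pi.smul_apply,
    smul_eq_mul, mul_zero, zero_mul, zero_add, Finset.mul_sum]
  exact Finset.sum_congr rfl fun _ _ => by ring

theorem det_bordered_one (u v : Fin n → R) (B : Matrix (Fin n) (Fin n) R) :
    det (bordered 1 u v B) = det (B - vecMulVec u v) := by
  rw [det_eq_of_forall_row_eq_smul_add_const (B := bordered 1 0 v (B - vecMulVec u v))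
    (Fin.cons 0 u) 0 rfl]
  -- subtracting `u i` times row `0` from row `i + 1` clears the first column
  · rw [det_succ_column_zero, Fin.sum_univ_succ]
    simp [bordered, submatrix]
    rfl
  · intro i j
    cases i using Fin.cases <;> cases j using Fin.cases <;> simp [bordered, vecMulVec]

theorem det_sub_smul_vecMulVec (a t : R) (u v : Fin n → R) (B : Matrix (Fin n) (Fin n) R) :
    det (B - t • vecMulVec u v) = det B + t * (det (bordered a u v B) - a * det B) := by
  rw [← vecMulVec_smul, ← det_bordered_one, det_bordered, det_bordered_zero_smul, det_bordered a]
  ring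

end Matrix

section Minor

variable {I : Type*} (M : I → I → ℂ)

theorem minor_comp_equiv {s k : ℕ} (e : Fin s ≃ Fin k) (A B : Fin k → I) :
    minor M (A ∘ e) (B ∘ e) = minor M A B :=
  Matrix.det_submatrix_equiv_self e (Matrix.of fun α β => M (A α) (B β))

theorem minor_append_cons (p : I) {s k : ℕ} (C D : Fin s → I) (E F : Fin k → I) :
    minor M (Fin.append (Fin.cons p C) E) (Fin.append (Fin.cons p D) F) =
      minor M (Fin.cons p (Fin.append C E)) (Fin.cons p (Fin.append D F)) := by
  rw [Fin.append_cons, Fin.append_cons]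
  exact minor_comp_equiv M (finCongr (by omega)) _ _

theorem minor_append_singleton (r c : I) {k : ℕ} (E F : Fin k → I) :
    minor M (Fin.append ![r] E) (Fin.append ![c] F) = minor M (Fin.cons r E) (Fin.cons c F) := by
  rw [Fin.append_left_eq_cons, Fin.append_left_eq_cons]
  exact minor_comp_equiv M (finCongr (by omega)) _ _

theorem minor_cons_cons (p : I) {s : ℕ} (C D : Fin s → I) :
    minor M (Fin.cons p C) (Fin.cons p D) =
      Matrix.det (Matrix.bordered (M p p) (fun i => M (C i) p) (fun j => M p (D j))
        (Matrix.of fun α β => M (C α) (D β))) := by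
  unfold minor
  congr 1
  ext i j
  cases i using Fin.cases <;> cases j using Fin.cases <;> rfl

theorem minor_sub_mul_col_mul_row (p : I) (t : ℂ) {s : ℕ} (C D : Fin s → I) :
    minor (fun i j => M i j - t * (M i p * M p j)) C D =
      minor M C D + t * (minor M (Fin.cons p C) (Fin.cons p D) - M p p * minor M C D) := by
  rw [minor_cons_cons, minor, minor, ← Matrix.det_sub_smul_vecMulVec]
  rfl

end Minor

section LineVector

variable {I : Type*} (M : I → I → ℂ) (i4 i5 : I)

theorem vvec_sub_mul_col_mul_row (p : I) (t : ℂ) {s : ℕ} (C D : Fin s → I) :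
    vvec (fun i j => M i j - t * (M i p * M p j)) i4 i5 C D =
      vvec M i4 i5 C D +
        t • (vvec M i4 i5 (Fin.cons p C) (Fin.cons p D) - M p p • vvec M i4 i5 C D) := by
  ext k
  fin_cases k <;> simp [vvec, minor_sub_mul_col_mul_row, minor_append_cons]

theorem form_vvec_singleton_eq_zero (r r' c : I) :
    form (vvec M i4 i5 ![r] ![c]) (vvec M i4 i5 ![r'] ![c]) = 0 := by
  simp only [form, vvec, minor_append_singleton, Matrix.cons_val_zero, Matrix.cons_val_one,
    Matrix.cons_val]
  simp [minor, Matrix.det_fin_two, Matrix.det_fin_three]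
  ring

end LineVector

theorem form_eq_zero_of_isotropic_add_sub {X Y : Fin 6 → ℂ} (hadd : form (X + Y) (X + Y) = 0)
    (hsub : form (X - Y) (X - Y) = 0) : form X Y = 0 := by
  simp only [form, Pi.add_apply, Pi.sub_apply] at *
  linear_combination (hadd - hsub) / 4

theorem form_sub_smul_right (X Y : Fin 6 → ℂ) (a : ℂ) :
    form X (Y - a • X) = form X Y - a * form X X := by
  simp only [form, Pi.sub_apply, Pi.smul_apply, smul_eq_mul]
  ring

theorem coplanarity_orthogonality_general {I : Type*} (M : I → I → ℂ) (l m p i4 i5 : I) :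
    form (vvec M i4 i5 ![l] ![m]) (vvec M i4 i5 ![p, l] ![p, m]) = 0
      ∧ form (vvec M i4 i5 ![l] ![m]) (vvec M i4 i5 ![p] ![m]) = 0 := by
  refine ⟨?_, form_vvec_singleton_eq_zero M i4 i5 l p m⟩
  have hperturb (t : ℂ) := vvec_sub_mul_col_mul_row M i4 i5 p t ![l] ![m]
  have hisotropic (t : ℂ) :=
    form_vvec_singleton_eq_zero (fun i j => M i j - t * (M i p * M p j)) i4 i5 l l m
  have horth := form_eq_zero_of_isotropic_add_sub
    (by simpa only [hperturb, one_smul] using hisotropic 1)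
    (by simpa only [hperturb, neg_one_smul, ← sub_eq_add_neg] using hisotropic (-1))
  rwa [form_sub_smul_right, form_vvec_singleton_eq_zero, mul_zero, sub_zero] at horth

/-- For a 5×5 matrix with rows and columns indexed by `{l, m, p, 4, 5}`, the
coplanarity identities `⟨V^{l,m}, V^{pl,pm}⟩ = 0` and `⟨V^{l,m}, V^{p,m}⟩ = 0` hold. -/
theorem coplanarity_orthogonality {I : Type*} (M : I → I → ℂ) (l m p i4 i5 : I)
    (h1 : l ≠ m) (h2 : l ≠ p) (h3 : l ≠ i4) (h4 : l ≠ i5)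
    (h5 : m ≠ p) (h6 : m ≠ i4) (h7 : m ≠ i5)
    (h8 : p ≠ i4) (h9 : p ≠ i5) (h10 : i4 ≠ i5) :
    form (vvec M i4 i5 ![l] ![m]) (vvec M i4 i5 ![p, l] ![p, m]) = 0
      ∧ form (vvec M i4 i5 ![l] ![m]) (vvec M i4 i5 ![p] ![m]) = 0 :=
  coplanarity_orthogonality_general M l m p i4 i5
end
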